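/- arXiv:2407.03754 — 3 statements merged into one kernel-verified Lean document; each statement's English description precedes it below -/
import Mathlib

section
/- Let p be a prime and let K be a field of characteristic different from p containing a primitive p-th root of unity. Let A be a subgroup of K^× containing (K^×)^p such that A/(K^×)^p is finite. Then K(\sqrt[p]{A})/K (the extension obtained by adjoining a p-th root of every element of A) is a finite Galois extension, its Galois group is isomorphic to Hom(A/(K^×)^p, μ_p), and in particular Gal(K(\sqrt[p]{A})/K) is abelian of exponent dividing p with order equal to the order of A/(K^×)^p. -/
/-!
For `σ ∈ Gal(F/K)` and an `n`-th root `x ∈ F` of `a ∈ A`, the quotient `σ x / x` is an `n`-th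
root of unity lying in `K`, and it does not depend on the chosen root, since two roots differ by
such a root of unity. This gives a bimultiplicative Kummer pairing
`Gal(F/K) × A/(K^×)^n → μ_n(K)`, trivial on `(K^×)^n`. It is nondegenerate in `σ` because `F` is
generated by the roots, and nondegenerate in `a` because a root fixed by the whole Galois group
lies in `K`. Each group then embeds into the `μ_n`-dual of the other, so both are abelian of
exponent dividing `n`, and `|Hom(H, μ_n)| = |H|` for such groups `H` forces both embeddings to be
bijective. `F/K` is finite Galois because it is the splitting field of the separable polynomial
`∏ (X^n - a)`, with `a` running over representatives of `A/(K^×)^n`.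
-/

open Polynomial IntermediateField

section Duality

variable {M : Type*} [CommMonoid M] {n : ℕ}

theorem rootsOfUnity.pow_self_eq_one (η : rootsOfUnity n M) : η ^ n = 1 :=
  Subtype.ext ((mem_rootsOfUnity n _).mp η.2)

theorem MonoidHom.pow_rootsOfUnity_eq_one {B : Type*} [MulOneClass B]
    (ψ : B →* rootsOfUnity n M) : ψ ^ n = 1 :=
  MonoidHom.ext fun b => by rw [MonoidHom.pow_apply, rootsOfUnity.pow_self_eq_one, one_apply]

theorem MonoidHom.mul_comm_of_injective {G H : Type*} [MulOneClass G] [CommMonoid H]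
    {f : G →* H} (hf : Function.Injective f) (g h : G) : g * h = h * g :=
  hf (by rw [map_mul, map_mul, mul_comm])

theorem MonoidHom.pow_eq_one_of_injective {G H : Type*} [Monoid G] [Monoid H] {f : G →* H}
    (hf : Function.Injective f) (hH : ∀ x : H, x ^ n = 1) (g : G) : g ^ n = 1 :=
  hf (by rw [map_pow, hH, map_one])

variable [NeZero n] [HasEnoughRootsOfUnity M n]

theorem card_monoidHom_rootsOfUnity {G : Type*} [CommGroup G] [Finite G]
    (hG : ∀ g : G, g ^ n = 1) : Nat.card (G →* rootsOfUnity n M) = Nat.card G := by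
  have : HasEnoughRootsOfUnity M (Monoid.exponent G) :=
    HasEnoughRootsOfUnity.of_dvd M (Monoid.exponent_dvd_of_forall_pow_eq_one hG)
  rw [← CommGroup.card_monoidHom_of_hasEnoughRootsOfUnity G M]
  refine Nat.card_congr
    { toFun := fun ψ => (rootsOfUnity n M).subtype.comp ψ
      invFun := fun ψ => ψ.codRestrict _ fun g => by rw [mem_rootsOfUnity, ← map_pow, hG, map_one]
      left_inv := fun _ => rfl
      right_inv := fun _ => rfl }

variable {G B : Type*} [Group G] [Group B] [Finite G] [Finite B]
  {φ : G →* B →* rootsOfUnity n M}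

theorem MonoidHom.card_eq_of_injective_of_injective_flip (hφ : Function.Injective φ)
    (hφ' : Function.Injective φ.flip) : Nat.card G = Nat.card B := by
  let : CommGroup G := { ‹Group G› with mul_comm := MonoidHom.mul_comm_of_injective hφ }
  let : CommGroup B := { ‹Group B› with mul_comm := MonoidHom.mul_comm_of_injective hφ' }
  have : Finite (G →* rootsOfUnity n M) := .of_injective _ DFunLike.coe_injective
  have : Finite (B →* rootsOfUnity n M) := .of_injective _ DFunLike.coe_injective
  have hG := MonoidHom.pow_eq_one_of_injective hφ MonoidHom.pow_rootsOfUnity_eq_one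
  have hB := MonoidHom.pow_eq_one_of_injective hφ' MonoidHom.pow_rootsOfUnity_eq_one
  refine le_antisymm ?_ ?_
  · calc Nat.card G ≤ Nat.card (B →* rootsOfUnity n M) := Nat.card_le_card_of_injective φ hφ
      _ = Nat.card B := card_monoidHom_rootsOfUnity hB
  · calc Nat.card B ≤ Nat.card (G →* rootsOfUnity n M) := Nat.card_le_card_of_injective _ hφ'
      _ = Nat.card G := card_monoidHom_rootsOfUnity hG

theorem MonoidHom.bijective_of_injective_of_injective_flip (hφ : Function.Injective φ)
    (hφ' : Function.Injective φ.flip) : Function.Bijective φ := by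
  let : CommGroup B := { ‹Group B› with mul_comm := MonoidHom.mul_comm_of_injective hφ' }
  have : Finite (B →* rootsOfUnity n M) := .of_injective _ DFunLike.coe_injective
  have hB := MonoidHom.pow_eq_one_of_injective hφ' MonoidHom.pow_rootsOfUnity_eq_one
  exact (Nat.bijective_iff_injective_and_card φ).mpr ⟨hφ,
    (card_eq_of_injective_of_injective_flip hφ hφ').trans (card_monoidHom_rootsOfUnity hB).symm⟩

end Duality

section KummerCharacter

variable {K L : Type*} [Field K] [Field L] [Algebra K L] {n : ℕ} [NeZero n]

theorem ne_zero_of_pow_eq_algebraMap {x : L} {a : Kˣ} (hx : x ^ n = algebraMap K L a) :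
    x ≠ 0 := by
  rintro rfl
  rw [zero_pow (NeZero.ne n), eq_comm, map_eq_zero] at hx
  exact a.ne_zero hx

variable [HasEnoughRootsOfUnity K n]

theorem exists_rootsOfUnity_algebraMap_eq {u : L} (hu : u ^ n = 1) :
    ∃ η : rootsOfUnity n K, algebraMap K L (η : Kˣ) = u := by
  obtain ⟨ζ, hζ⟩ := HasEnoughRootsOfUnity.exists_primitiveRoot K n
  obtain ⟨i, -, hi⟩ := (hζ.map_of_injective (algebraMap K L).injective).eq_pow_of_pow_eq_one hu
  exact ⟨hζ.toRootsOfUnity ^ i, by simpa using hi⟩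

theorem exists_eq_rootsOfUnity_mul_of_pow_eq {x y : L} (hy : y ≠ 0) (h : x ^ n = y ^ n) :
    ∃ η : rootsOfUnity n K, x = algebraMap K L (η : Kˣ) * y := by
  obtain ⟨η, hη⟩ := exists_rootsOfUnity_algebraMap_eq (K := K) (u := x / y)
    (by rw [div_pow, h, div_self (pow_ne_zero _ hy)])
  exact ⟨η, by rw [hη, div_mul_cancel₀ _ hy]⟩

theorem AlgEquiv.exists_apply_eq_rootsOfUnity_mul (σ : L ≃ₐ[K] L) {x : L} {a : Kˣ}
    (hx : x ^ n = algebraMap K L a) : ∃ η : rootsOfUnity n K, σ x = algebraMap K L (η : Kˣ) * x :=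
  exists_eq_rootsOfUnity_mul_of_pow_eq (ne_zero_of_pow_eq_algebraMap hx)
    (by rw [← map_pow, hx, σ.commutes])

variable (n) in
/-- Arbitrary when `a` has no `n`-th root in `L`. -/
noncomputable def kummerChar (σ : L ≃ₐ[K] L) (a : Kˣ) : rootsOfUnity n K :=
  Classical.epsilon fun η =>
    ∀ x : L, x ^ n = algebraMap K L a → σ x = algebraMap K L (η : Kˣ) * x

theorem kummerChar_spec (σ : L ≃ₐ[K] L) {a : Kˣ} {x : L} (hx : x ^ n = algebraMap K L a) :
    σ x = algebraMap K L (kummerChar n σ a : Kˣ) * x := by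
  refine Classical.epsilon_spec (p := fun η : rootsOfUnity n K =>
    ∀ x : L, x ^ n = algebraMap K L a → σ x = algebraMap K L (η : Kˣ) * x) ?_ x hx
  obtain ⟨η, hη⟩ := σ.exists_apply_eq_rootsOfUnity_mul hx
  refine ⟨η, fun y hy => ?_⟩
  obtain ⟨θ, rfl⟩ := exists_eq_rootsOfUnity_mul_of_pow_eq (K := K)
    (ne_zero_of_pow_eq_algebraMap hx) (hy.trans hx.symm)
  rw [map_mul, σ.commutes, hη, mul_left_comm]

theorem kummerChar_eq_of_apply_eq {σ : L ≃ₐ[K] L} {a : Kˣ} {x : L}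
    (hx : x ^ n = algebraMap K L a) {η : rootsOfUnity n K}
    (h : σ x = algebraMap K L (η : Kˣ) * x) : kummerChar n σ a = η := by
  rw [kummerChar_spec σ hx] at h
  exact rootsOfUnity.coe_injective
    ((algebraMap K L).injective (mul_right_cancel₀ (ne_zero_of_pow_eq_algebraMap hx) h))

theorem kummerChar_mul_left (σ τ : L ≃ₐ[K] L) {a : Kˣ} {x : L}
    (hx : x ^ n = algebraMap K L a) :
    kummerChar n (σ * τ) a = kummerChar n σ a * kummerChar n τ a := by
  refine kummerChar_eq_of_apply_eq hx ?_
  rw [AlgEquiv.mul_apply, kummerChar_spec τ hx, map_mul, σ.commutes, kummerChar_spec σ hx]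
  push_cast
  ring

theorem kummerChar_mul_right (σ : L ≃ₐ[K] L) {a b : Kˣ} {x y : L}
    (hx : x ^ n = algebraMap K L a) (hy : y ^ n = algebraMap K L b) :
    kummerChar n σ (a * b) = kummerChar n σ a * kummerChar n σ b := by
  refine kummerChar_eq_of_apply_eq (x := x * y) (by rw [mul_pow, hx, hy, ← map_mul]; rfl) ?_
  rw [map_mul, kummerChar_spec σ hx, kummerChar_spec σ hy]
  push_cast
  ring

theorem kummerChar_pow_self (σ : L ≃ₐ[K] L) (c : Kˣ) : kummerChar n σ (c ^ n) = 1 :=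
  kummerChar_eq_of_apply_eq (x := algebraMap K L c) (by rw [← map_pow]; rfl) (by simp)

variable (n) in
noncomputable def kummerPairing (A : Subgroup Kˣ)
    (hA : ∀ a ∈ A, ∃ x : L, x ^ n = algebraMap K L a) :
    (L ≃ₐ[K] L) →* (A ⧸ (powMonoidHom n : Kˣ →* Kˣ).range.subgroupOf A) →* rootsOfUnity n K :=
  MonoidHom.mk'
    (fun σ => QuotientGroup.lift _
      (MonoidHom.mk' (fun a => kummerChar n σ a) fun a b => by
        obtain ⟨x, hx⟩ := hA a a.2
        obtain ⟨y, hy⟩ := hA b b.2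
        exact kummerChar_mul_right σ hx hy)
      (by
        rintro a ⟨c, hc⟩
        rw [MonoidHom.mem_ker, MonoidHom.mk'_apply, show (a : Kˣ) = c ^ n from hc.symm]
        exact kummerChar_pow_self σ c))
    (fun σ τ => QuotientGroup.monoidHom_ext _ <| MonoidHom.ext fun a => by
      obtain ⟨x, hx⟩ := hA a a.2
      exact kummerChar_mul_left σ τ hx)

variable {A : Subgroup Kˣ} (hA : ∀ a ∈ A, ∃ x : L, x ^ n = algebraMap K L a)

@[simp]
theorem kummerPairing_apply_mk (σ : L ≃ₐ[K] L) (a : A) :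
    kummerPairing n A hA σ a = kummerChar n σ a :=
  rfl

theorem kummerPairing_flip_injective [IsGalois K L] :
    Function.Injective (kummerPairing n A hA).flip := by
  rw [injective_iff_map_eq_one]
  intro q hq
  induction q using QuotientGroup.induction_on with | H a => ?_
  obtain ⟨x, hx⟩ := hA a a.2
  have hfix (σ : L ≃ₐ[K] L) : σ x = x := by
    have hσ : kummerChar n σ a = 1 := by
      rw [← kummerPairing_apply_mk hA, ← MonoidHom.flip_apply, hq, MonoidHom.one_apply]
    rw [kummerChar_spec σ hx, hσ]
    simp
  obtain ⟨c, rfl⟩ := mem_bot.mp ((InfiniteGalois.mem_bot_iff_fixed x).mpr hfix)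
  have hc : c ≠ 0 := by rintro rfl; exact ne_zero_of_pow_eq_algebraMap hx (map_zero _)
  rw [QuotientGroup.eq_one_iff, Subgroup.mem_subgroupOf]
  refine ⟨Units.mk0 c hc, Units.ext ((algebraMap K L).injective ?_)⟩
  simpa using hx

end KummerCharacter

theorem Subgroup.exists_finset_forall_mem_eq_mul_pow {G : Type*} [CommGroup G] {n : ℕ}
    (A : Subgroup G) [Finite (A ⧸ (powMonoidHom n : G →* G).range.subgroupOf A)] :
    ∃ s : Finset G, ↑s ⊆ (A : Set G) ∧ ∀ b ∈ A, ∃ a ∈ s, ∃ c : G, b = a * c ^ n := by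
  classical
  have := Fintype.ofFinite (A ⧸ (powMonoidHom n : G →* G).range.subgroupOf A)
  refine ⟨Finset.univ.image fun q : A ⧸ (powMonoidHom n : G →* G).range.subgroupOf A =>
    ((Quotient.out q : A) : G), ?_, fun b hb => ?_⟩
  · intro a ha
    obtain ⟨q, -, rfl⟩ := Finset.mem_image.mp ha
    exact (Quotient.out q).2
  · set q : A ⧸ (powMonoidHom n : G →* G).range.subgroupOf A := QuotientGroup.mk ⟨b, hb⟩
    obtain ⟨c, hc⟩ := Subgroup.mem_subgroupOf.mp (QuotientGroup.eq.mp q.out_eq')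
    refine ⟨q.out, Finset.mem_image_of_mem _ (Finset.mem_univ q), c, ?_⟩
    rw [powMonoidHom_apply] at hc
    simp [hc]

namespace Polynomial

variable {K : Type*} [Field K] {n : ℕ}

theorem isCoprime_X_pow_sub_C_of_ne {a b : K} (h : a ≠ b) :
    IsCoprime (X ^ n - C a) (X ^ n - C b) := by
  simpa only [AlgHom.toRingHom_eq_coe, RingHom.coe_coe, map_sub, expand_X, expand_C] using
    (isCoprime_X_sub_C_of_isUnit_sub (sub_ne_zero.mpr h).isUnit).map (expand K n).toRingHom

theorem separable_prod_X_pow_sub_C (s : Finset Kˣ) (hn : (n : K) ≠ 0) :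
    (∏ a ∈ s, (X ^ n - C (a : K))).Separable :=
  separable_prod' (fun _ _ _ _ hab => isCoprime_X_pow_sub_C_of_ne (Units.val_injective.ne hab))
    fun a _ => separable_X_pow_sub_C _ hn a.ne_zero

theorem mem_rootSet_prod_X_pow_sub_C [NeZero n] {E : Type*} [Field E] [Algebra K E]
    {s : Finset Kˣ} {x : E} :
    x ∈ (∏ a ∈ s, (X ^ n - C (a : K))).rootSet E ↔ ∃ a ∈ s, x ^ n = algebraMap K E a := by
  rw [rootSet_prod _ _ (Finset.prod_ne_zero_iff.mpr fun a _ => X_pow_sub_C_ne_zero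
    (NeZero.pos n) _)]
  simp [mem_rootSet, X_pow_sub_C_ne_zero (NeZero.pos n), sub_eq_zero]

end Polynomial

section KummerField

variable (K E : Type*) [Field K] [Field E] [Algebra K E] (n : ℕ) (A : Subgroup Kˣ)

def kummerField : IntermediateField K E :=
  adjoin K {x : E | ∃ a : Kˣ, a ∈ A ∧ x ^ n = algebraMap K E a}

variable {K E n A} [NeZero n]

theorem exists_pow_eq_algebraMap_of_mem [IsAlgClosed E] {a : Kˣ} (ha : a ∈ A) :
    ∃ x : kummerField K E n A, x ^ n = algebraMap K _ a := by
  obtain ⟨x, hx⟩ := IsAlgClosed.exists_pow_nat_eq (algebraMap K E a) (NeZero.pos n)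
  exact ⟨⟨x, subset_adjoin K _ ⟨a, ha, hx⟩⟩, Subtype.ext hx⟩

theorem kummerField_eq_adjoin_rootSet {s : Finset Kˣ} (hsA : ↑s ⊆ (A : Set Kˣ))
    (hs : ∀ b ∈ A, ∃ a ∈ s, ∃ c : Kˣ, b = a * c ^ n) :
    kummerField K E n A = adjoin K ((∏ a ∈ s, (X ^ n - C (a : K))).rootSet E) := by
  refine le_antisymm (adjoin_le_iff.mpr ?_) (adjoin.mono K _ _ fun x hx => ?_)
  · rintro x ⟨b, hb, hx⟩
    obtain ⟨a, ha, c, rfl⟩ := hs b hb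
    have hc : algebraMap K E c ≠ 0 := by simp
    have hroot : x / algebraMap K E c ∈ (∏ a ∈ s, (X ^ n - C (a : K))).rootSet E :=
      mem_rootSet_prod_X_pow_sub_C.mpr ⟨a, ha, by
        rw [div_pow, hx, ← map_pow, Units.val_mul, Units.val_pow_eq_pow_val, map_mul,
          mul_div_cancel_right₀ _ (by simp)]⟩
    have := mul_mem (subset_adjoin K _ hroot) (IntermediateField.algebraMap_mem _ (c : K))
    rwa [div_mul_cancel₀ _ hc] at this
  · obtain ⟨a, ha, hx⟩ := mem_rootSet_prod_X_pow_sub_C.mp hx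
    exact ⟨a, hsA ha, hx⟩

theorem kummerPairing_injective [HasEnoughRootsOfUnity K n]
    (hA : ∀ a ∈ A, ∃ x : kummerField K E n A, x ^ n = algebraMap K _ a) :
    Function.Injective (kummerPairing n A hA) := by
  rw [injective_iff_map_eq_one]
  intro σ hσ
  refine AlgEquiv.ext fun y => congrArg (· y) <|
    algHom_ext_of_eq_adjoin K (S := kummerField K E n A) rfl
      (φ₁ := σ.toAlgHom) (φ₂ := AlgHom.id K _) fun x ⟨a, ha, hx⟩ => ?_
  have hχ : kummerChar n σ a = 1 := by
    rw [← kummerPairing_apply_mk hA σ ⟨a, ha⟩, hσ, MonoidHom.one_apply]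
  rw [AlgHom.id_apply]
  simpa [hχ] using kummerChar_spec σ (x := ⟨x, subset_adjoin K _ ⟨a, ha, hx⟩⟩) (Subtype.ext hx)

variable [IsAlgClosed E] [Finite (A ⧸ (powMonoidHom n : Kˣ →* Kˣ).range.subgroupOf A)]

variable (K E n A) in
theorem exists_isSplittingField_kummerField :
    ∃ s : Finset Kˣ, IsSplittingField K (kummerField K E n A) (∏ a ∈ s, (X ^ n - C (a : K))) := by
  obtain ⟨s, hsA, hs⟩ := A.exists_finset_forall_mem_eq_mul_pow (n := n)
  rw [kummerField_eq_adjoin_rootSet hsA hs]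
  exact ⟨s, adjoin_rootSet_isSplittingField (IsAlgClosed.splits _)⟩

instance : FiniteDimensional K (kummerField K E n A) := by
  obtain ⟨s, _⟩ := exists_isSplittingField_kummerField K E n A
  exact IsSplittingField.finiteDimensional _ (∏ a ∈ s, (X ^ n - C (a : K)))

instance [NeZero (n : K)] : IsGalois K (kummerField K E n A) := by
  obtain ⟨s, _⟩ := exists_isSplittingField_kummerField K E n A
  exact IsGalois.of_separable_splitting_field (separable_prod_X_pow_sub_C s (NeZero.ne (n : K)))

end KummerField

theorem kummer_extension_galois_group_general
    (K : Type*) [Field K] (p : ℕ) (hp : p.Prime)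
    (ζ : K) (hζ : IsPrimitiveRoot ζ p)
    (A : Subgroup Kˣ)
    (hfin : Finite (A ⧸ ((powMonoidHom p : Kˣ →* Kˣ).range.subgroupOf A)))
    (F : IntermediateField K (AlgebraicClosure K))
    (hF : F = IntermediateField.adjoin K
      {x : AlgebraicClosure K | ∃ a : Kˣ, a ∈ A ∧ x ^ p = algebraMap K (AlgebraicClosure K) a}) :
    FiniteDimensional K F ∧ IsGalois K F ∧
      Nonempty ((F ≃ₐ[K] F) ≃*
        ((A ⧸ ((powMonoidHom p : Kˣ →* Kˣ).range.subgroupOf A)) →* (rootsOfUnity p K))) ∧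
      (∀ g h : F ≃ₐ[K] F, g * h = h * g) ∧ (∀ g : F ≃ₐ[K] F, g ^ p = 1) ∧
      Nat.card (F ≃ₐ[K] F)
        = Nat.card (A ⧸ ((powMonoidHom p : Kˣ →* Kˣ).range.subgroupOf A)) := by
  obtain rfl : F = kummerField K (AlgebraicClosure K) p A := hF
  have : NeZero p := ⟨hp.ne_zero⟩
  have : NeZero (p : K) := hζ.neZero'
  have : HasEnoughRootsOfUnity K p := ⟨⟨ζ, hζ⟩, inferInstance⟩
  have hA : ∀ a ∈ A, ∃ x : kummerField K (AlgebraicClosure K) p A, x ^ p = algebraMap K _ a :=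
    fun _ => exists_pow_eq_algebraMap_of_mem
  have hinj := kummerPairing_injective hA
  have hinj' := kummerPairing_flip_injective hA
  refine ⟨inferInstance, inferInstance,
    ⟨MulEquiv.ofBijective _ (MonoidHom.bijective_of_injective_of_injective_flip hinj hinj')⟩,
    MonoidHom.mul_comm_of_injective hinj,
    MonoidHom.pow_eq_one_of_injective hinj MonoidHom.pow_rootsOfUnity_eq_one,
    MonoidHom.card_eq_of_injective_of_injective_flip hinj hinj'⟩

/-- Let `p` be a prime and let `K` be a field of characteristic different from
`p` containing a primitive `p`-th root of unity.  Let `A` be a subgroup of `K^×` containing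
`(K^×)^p` such that `A/(K^×)^p` is finite.  Then `K(√[p]{A})/K` (the extension obtained by
adjoining a `p`-th root of every element of `A`, here realized inside an algebraic closure of
`K`) is a finite Galois extension, its Galois group is isomorphic to
`Hom(A/(K^×)^p, μ_p)`, and in particular it is abelian of exponent dividing `p`
with order equal to the order of `A/(K^×)^p`. -/
theorem kummer_extension_galois_group
    (K : Type*) [Field K] (p : ℕ) (hp : p.Prime) (hchar : ringChar K ≠ p)
    (ζ : K) (hζ : IsPrimitiveRoot ζ p)
    (A : Subgroup Kˣ) (hA : (powMonoidHom p : Kˣ →* Kˣ).range ≤ A)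
    (hfin : Finite (A ⧸ ((powMonoidHom p : Kˣ →* Kˣ).range.subgroupOf A)))
    (F : IntermediateField K (AlgebraicClosure K))
    (hF : F = IntermediateField.adjoin K
      {x : AlgebraicClosure K | ∃ a : Kˣ, a ∈ A ∧ x ^ p = algebraMap K (AlgebraicClosure K) a}) :
    FiniteDimensional K F ∧ IsGalois K F ∧
      Nonempty ((F ≃ₐ[K] F) ≃*
        ((A ⧸ ((powMonoidHom p : Kˣ →* Kˣ).range.subgroupOf A)) →* (rootsOfUnity p K))) ∧
      (∀ g h : F ≃ₐ[K] F, g * h = h * g) ∧ (∀ g : F ≃ₐ[K] F, g ^ p = 1) ∧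
      Nat.card (F ≃ₐ[K] F)
        = Nat.card (A ⧸ ((powMonoidHom p : Kˣ →* Kˣ).range.subgroupOf A)) :=
  kummer_extension_galois_group_general K p hp ζ hζ A hfin F hF
end

section
/- Take p = 2 (so K' = K) and set S̄ = S_0 ∪ Pl^{re}_K. For each real place v ∈ Pl^{re}_K \ S_∞, let τ_v ∈ Gal(F_T^{S̄}/K) denote the complex conjugation induced by any embedding of F_T^{S̄} into ℂ extending the real embedding ι_v of K, and let H_{S_∞} be the subgroup of Gal(F_T^{S̄}/K) generated by all such τ_v. Then F_T^S = K(√{E_T^S}) is the fixed field of H_{S_∞} in F_T^{S̄} = K(√{E_T^{S̄}}); equivalently, Gal(K(√{E_T^S})/K) ≅ Gal(F_T^{S̄}/K)/H_{S_∞}. -/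
/-!
`Gal(F/K)` is an elementary abelian `2`-group, and every square root `x` of an element of
`E_T^{S̄}` gives a character `σ ↦ [σ x ≠ x]` of it. These Kummer characters separate points, hence
exhaust the dual `𝔽₂`-vector space, so every subgroup `H` is cut out by the characters vanishing
on it: the fixed field of `H` is generated by the square roots it contains. Finally, the complex
conjugation at a real place `v` fixes `√ε` exactly when `ε` is positive at `v`, so the square roots
fixed by `H_{S_∞}` are those of elements of `E_T^S`.
-/

open IsDedekindDomain NumberField NumberField.InfinitePlace IntermediateField
open scoped Multiplicative

/-- The group `E_T^{S'}` of `S'`-units of `K` congruent to `1` modulo every place of `T`,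
described as a subset of `Kˣ`. -/
def unitsETS (K : Type*) [Field K] [NumberField K]
    (T S₀ : Set (IsDedekindDomain.HeightOneSpectrum (𝓞 K)))
    (Sinf : Set (InfinitePlace K)) : Set Kˣ :=
  {x : Kˣ |
    (∀ v : IsDedekindDomain.HeightOneSpectrum (𝓞 K), v ∉ S₀ → v.valuation K (x : K) = 1) ∧
    (∀ (w : InfinitePlace K) (hw : IsReal w), w ∉ Sinf → 0 < embedding_of_isReal hw (x : K)) ∧
    (∀ v ∈ T, v.valuation K ((x : K) - 1) < 1)}

theorem exists_mem_forall_eq_zero_and_ne_zero_of_notMem {G : Type*} [Group G] [Finite G]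
    (hG : ∀ g : G, g * g = 1) {C : AddSubgroup (Additive G →+ ZMod 2)}
    (hC : ∀ g : G, (∀ χ ∈ C, χ (.ofMul g) = 0) → g = 1) {H : Subgroup G} {σ : G} (hσ : σ ∉ H) :
    ∃ χ ∈ C, (∀ h ∈ H, χ (.ofMul h) = 0) ∧ χ (.ofMul σ) ≠ 0 := by
  let _ : CommGroup G :=
    { mul_comm := fun a b => (Commute.of_orderOf_dvd_two
        (fun g => orderOf_dvd_of_pow_eq_one (by rw [sq, hG g])) a b).eq }
  let _ : Module (ZMod 2) (Additive G) :=
    AddCommGroup.zmodModule fun g => by rw [two_nsmul]; exact hG g.toMul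
  let W : Submodule (ZMod 2) (Module.Dual (ZMod 2) (Additive G)) :=
    AddSubgroup.toZModSubmodule 2 (C.comap LinearMap.toAddMonoidHom')
  -- characters that separate the points of a finite-dimensional space span its dual
  have hW : W = ⊤ := by
    have : W.dualCoannihilator = ⊥ := by
      refine (Submodule.eq_bot_iff _).mpr fun g hg => hC g.toMul fun χ hχ => ?_
      exact (Submodule.mem_dualCoannihilator g).mp hg (χ.toZModLinearMap 2) hχ
    rw [← Subspace.dualCoannihilator_dualAnnihilator_eq (W := W), this,
      Submodule.dualAnnihilator_bot]
  let U := AddSubgroup.toZModSubmodule 2 H.toAddSubgroup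
  obtain ⟨f, hfU, hfσ⟩ : ∃ f ∈ U.dualAnnihilator, f (.ofMul σ) ≠ 0 := by
    by_contra! h
    exact hσ ((Subspace.forall_mem_dualAnnihilator_apply_eq_zero_iff U _).mp h)
  exact ⟨f.toAddMonoidHom, (hW ▸ Submodule.mem_top : f ∈ W),
    fun h hh => (Submodule.mem_dualAnnihilator f).mp hfU _ hh, hfσ⟩

section Galois

variable {K F : Type*} [Field K] [Field F] [Algebra K F]

theorem IntermediateField.mem_fixedField_closure_iff {S : Set (F ≃ₐ[K] F)} {x : F} :
    x ∈ fixedField (Subgroup.closure S) ↔ ∀ σ ∈ S, σ x = x :=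
  ⟨fun h σ hσ => (mem_fixedField_iff _ x).mp h σ (Subgroup.subset_closure hσ),
    fun h => (mem_fixedField_iff _ x).mpr fun _ hσ =>
      (Subgroup.closure_le (MulAction.stabilizer (F ≃ₐ[K] F) x)).mpr h hσ⟩

theorem IntermediateField.mem_fixingSubgroup_adjoin_iff {S : Set F} {σ : F ≃ₐ[K] F} :
    σ ∈ (adjoin K S).fixingSubgroup ↔ ∀ x ∈ S, σ x = x := by
  rw [← Subgroup.zpowers_le, ← le_iff_le, adjoin_le_iff, Subgroup.zpowers_eq_closure]
  simp only [Set.subset_def, SetLike.mem_coe, mem_fixedField_closure_iff, Set.mem_singleton_iff,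
    forall_eq]

theorem AlgEquiv.eq_one_of_adjoin_eq_top {S : Set F} (hS : adjoin K S = ⊤) {σ : F ≃ₐ[K] F}
    (h : ∀ x ∈ S, σ x = x) : σ = 1 := by
  simpa [hS] using mem_fixingSubgroup_adjoin_iff.mpr h

end Galois

section Kummer

variable {K F : Type*} [Field K] [Field F] [Algebra K F]

variable (F) in
def sqrts (E : Set Kˣ) : Set F := {x : F | ∃ ε : Kˣ, ε ∈ E ∧ x ^ 2 = algebraMap K F (ε : K)}

theorem ne_zero_of_mem_sqrts {E : Set Kˣ} {x : F} (hx : x ∈ sqrts F E) : x ≠ 0 := by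
  obtain ⟨ε, -, hx⟩ := hx
  rintro rfl
  exact ε.ne_zero ((algebraMap K F).injective (by rw [← hx, map_zero, zero_pow two_ne_zero]))

theorem mul_mem_sqrts {E : Submonoid Kˣ} {x y : F} (hx : x ∈ sqrts F (E : Set Kˣ))
    (hy : y ∈ sqrts F (E : Set Kˣ)) : x * y ∈ sqrts F (E : Set Kˣ) := by
  obtain ⟨ε, hε, hx⟩ := hx
  obtain ⟨δ, hδ, hy⟩ := hy
  exact ⟨ε * δ, E.mul_mem hε hδ, by rw [mul_pow, hx, hy, Units.val_mul, map_mul]⟩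

theorem one_mem_sqrts (E : Submonoid Kˣ) : (1 : F) ∈ sqrts F (E : Set Kˣ) :=
  ⟨1, E.one_mem, by simp⟩

theorem AlgEquiv.apply_eq_or_eq_neg_of_sq_eq (σ : F ≃ₐ[K] F) {x : F} {c : K}
    (hx : x ^ 2 = algebraMap K F c) : σ x = x ∨ σ x = -x :=
  sq_eq_sq_iff_eq_or_eq_neg.mp (by rw [← map_pow, hx, σ.commutes])

theorem AlgEquiv.apply_mul_eq_iff_of_mem_sqrts (σ : F ≃ₐ[K] F) {E : Set Kˣ} {x y : F}
    (hx : x ∈ sqrts F E) (hy : y ∈ sqrts F E) :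
    σ (x * y) = x * y ↔ (σ x = x ↔ σ y = y) := by
  have hx0 := ne_zero_of_mem_sqrts hx
  have hy0 := ne_zero_of_mem_sqrts hy
  obtain ⟨ε, -, hxε⟩ := hx
  obtain ⟨δ, -, hyδ⟩ := hy
  rw [map_mul]
  by_cases hσx : σ x = x
  · simp [hσx, mul_right_inj' hx0]
  by_cases hσy : σ y = y
  · simp [hσx, hσy, mul_left_inj' hy0]
  have : σ x * σ y = x * y := by
    rw [(σ.apply_eq_or_eq_neg_of_sq_eq hxε).resolve_left hσx,
      (σ.apply_eq_or_eq_neg_of_sq_eq hyδ).resolve_left hσy, neg_mul_neg]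
  simp [this, hσx, hσy]

theorem exists_addMonoidHom_eq_zero_iff_apply_eq {x : F} {c : K}
    (hx : x ^ 2 = algebraMap K F c) :
    ∃ χ : Additive (F ≃ₐ[K] F) →+ ZMod 2, ∀ σ, χ (.ofMul σ) = 0 ↔ σ x = x := by
  classical
  refine ⟨AddMonoidHom.mk' (fun σ => if σ.toMul x = x then 0 else 1) fun σ τ => ?_,
    fun σ => by simp⟩
  have hσ := σ.toMul.apply_eq_or_eq_neg_of_sq_eq hx
  have hτ := τ.toMul.apply_eq_or_eq_neg_of_sq_eq hx
  simp only [toMul_add, AlgEquiv.mul_apply]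
  by_cases hσx : σ.toMul x = x <;> by_cases hτx : τ.toMul x = x
  · simp [hσx, hτx]
  · simp [hσx, hτ.resolve_left hτx]
  · simp [hσx, hτx]
  · have hστ : σ.toMul (τ.toMul x) = x := by
      rw [hτ.resolve_left hτx, map_neg, hσ.resolve_left hσx, neg_neg]
    simp [hστ, hσx, hτx]
    decide

variable (F) in
def kummerCharacters (E : Submonoid Kˣ) : AddSubgroup (Additive (F ≃ₐ[K] F) →+ ZMod 2) where
  carrier := {χ | ∃ x ∈ sqrts F (E : Set Kˣ), ∀ σ, χ (.ofMul σ) = 0 ↔ σ x = x}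
  zero_mem' := ⟨1, one_mem_sqrts E, by simp⟩
  add_mem' := by
    rintro χ ψ ⟨x, hx, hχ⟩ ⟨y, hy, hψ⟩
    refine ⟨x * y, mul_mem_sqrts hx hy, fun σ => ?_⟩
    rw [σ.apply_mul_eq_iff_of_mem_sqrts hx hy, ← hχ, ← hψ, AddMonoidHom.add_apply]
    generalize χ (.ofMul σ) = a
    generalize ψ (.ofMul σ) = b
    decide +revert
  neg_mem' := by
    rintro χ ⟨x, hx, hχ⟩
    exact ⟨x, hx, fun σ => by rw [AddMonoidHom.neg_apply, neg_eq_zero, hχ]⟩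

theorem mul_self_eq_one_of_adjoin_sqrts_eq_top {E : Set Kˣ} (hE : adjoin K (sqrts F E) = ⊤)
    (σ : F ≃ₐ[K] F) : σ * σ = 1 :=
  AlgEquiv.eq_one_of_adjoin_eq_top hE fun x ⟨_, _, hx⟩ => by
    rcases σ.apply_eq_or_eq_neg_of_sq_eq hx with h | h <;> simp [h]

theorem eq_one_of_forall_kummerCharacters {E : Submonoid Kˣ}
    (hE : adjoin K (sqrts F (E : Set Kˣ)) = ⊤) (σ : F ≃ₐ[K] F)
    (hσ : ∀ χ ∈ kummerCharacters F E, χ (.ofMul σ) = 0) : σ = 1 :=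
  AlgEquiv.eq_one_of_adjoin_eq_top hE fun x ⟨ε, hε, hx⟩ => by
    obtain ⟨χ, hχ⟩ := exists_addMonoidHom_eq_zero_iff_apply_eq hx
    exact (hχ σ).mp (hσ χ ⟨x, ⟨ε, hε, hx⟩, hχ⟩)

theorem minpoly_map_splits_of_sq_eq {x : F} {c : K} (hx : x ^ 2 = algebraMap K F c) :
    ((minpoly K x).map (algebraMap K F)).Splits := by
  have hfactor : (Polynomial.X ^ 2 - Polynomial.C c).map (algebraMap K F) =
      (Polynomial.X - Polynomial.C x) * (Polynomial.X - Polynomial.C (-x)) := by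
    rw [Polynomial.map_sub, Polynomial.map_pow, Polynomial.map_X, Polynomial.map_C, ← hx,
      Polynomial.C_pow, Polynomial.C_neg]
    ring
  refine Polynomial.Splits.of_dvd ?_
    (Polynomial.map_ne_zero (Polynomial.X_pow_sub_C_ne_zero two_pos c))
    (Polynomial.map_dvd _ (minpoly.dvd K x (by simp [hx])))
  rw [hfactor]
  exact (Polynomial.Splits.X_sub_C _).mul (Polynomial.Splits.X_sub_C _)

theorem normal_of_adjoin_sqrts_eq_top [Algebra.IsAlgebraic K F] {E : Set Kˣ}
    (hE : adjoin K (sqrts F E) = ⊤) : Normal K F :=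
  normal_iff.mpr fun y => ⟨Algebra.IsIntegral.isIntegral y,
    IntermediateField.splits_of_mem_adjoin K F (S := sqrts F E)
      (fun x ⟨_, _, hx⟩ => ⟨Algebra.IsIntegral.isIntegral x, minpoly_map_splits_of_sq_eq hx⟩)
      (hE ▸ mem_top)⟩

theorem fixedField_eq_adjoin_sqrts_inter [FiniteDimensional K F] [IsGalois K F]
    {E : Submonoid Kˣ} (hE : adjoin K (sqrts F (E : Set Kˣ)) = ⊤) (H : Subgroup (F ≃ₐ[K] F)) :
    fixedField H = adjoin K (sqrts F (E : Set Kˣ) ∩ fixedField H) := by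
  set M := adjoin K (sqrts F (E : Set Kˣ) ∩ fixedField H)
  have hMH : M ≤ fixedField H := adjoin_le_iff.mpr Set.inter_subset_right
  suffices M.fixingSubgroup ≤ H by
    rw [← IsGalois.fixedField_fixingSubgroup M,
      le_antisymm ((IntermediateField.le_iff_le _ _).mp hMH) this]
  intro σ hσ
  by_contra hσH
  obtain ⟨χ, ⟨x, hx, hχ⟩, hχH, hχσ⟩ := exists_mem_forall_eq_zero_and_ne_zero_of_notMem
    (mul_self_eq_one_of_adjoin_sqrts_eq_top hE) (eq_one_of_forall_kummerCharacters hE) hσH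
  have hxM : x ∈ M :=
    subset_adjoin K _ ⟨hx, (mem_fixedField_iff _ _).mpr fun τ hτ => (hχ τ).mp (hχH τ hτ)⟩
  exact hχσ ((hχ σ).mpr (hσ ⟨x, hxM⟩))

end Kummer

theorem Complex.conj_eq_iff_pos_of_sq_eq {z : ℂ} {r : ℝ} (hz : z ≠ 0) (h : z ^ 2 = r) :
    starRingEnd ℂ z = z ↔ 0 < r := by
  have hre : z.re * z.re - z.im * z.im = r := by simpa [sq] using congrArg Complex.re h
  have him : z.re * z.im + z.im * z.re = 0 := by simpa [sq] using congrArg Complex.im h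
  rw [Complex.conj_eq_iff_im]
  constructor
  · intro h0
    have hre0 : z.re ≠ 0 := fun h1 => hz (Complex.ext h1 h0)
    rw [← hre, h0, mul_zero, sub_zero]
    exact mul_self_pos.mpr hre0
  · intro hr
    by_contra h0
    have hre0 : z.re = 0 := by
      have : z.re * z.im = 0 := by linarith
      exact (mul_eq_zero.mp this).resolve_right h0
    nlinarith [mul_self_nonneg z.im]

section RealPlaces

variable {K F : Type*} [Field K] [Field F] [Algebra K F]

theorem exists_algEquiv_conj_of_realEmbedding [Normal K F] (ι : K →+* ℝ) :
    ∃ τ : F ≃ₐ[K] F, ∃ φ : F →+* ℂ, (∀ x : K, φ (algebraMap K F x) = ι x) ∧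
      ∀ y : F, φ (τ y) = starRingEnd ℂ (φ y) := by
  let _ : Algebra K ℝ := ι.toAlgebra
  let _ : Algebra K ℂ := (Complex.ofRealHom.comp ι).toAlgebra
  have _ : IsScalarTower K ℝ ℂ := IsScalarTower.of_algebraMap_eq fun _ => rfl
  let ψ : F →ₐ[K] ℂ := IsAlgClosed.lift
  let _ : Algebra F ℂ := ψ.toAlgebra
  have _ : IsScalarTower K F ℂ := IsScalarTower.of_algebraMap_eq fun x => (ψ.commutes x).symm
  exact ⟨(Complex.conjAe.restrictScalars K).toAlgHom.restrictNormal' F, ψ, ψ.commutes,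
    AlgHom.restrictNormal_commutes _ F⟩

theorem apply_eq_iff_pos_of_conj {ι : K →+* ℝ} {τ : F ≃ₐ[K] F} {φ : F →+* ℂ}
    (hφ : ∀ x : K, φ (algebraMap K F x) = ι x) (hτ : ∀ y : F, φ (τ y) = starRingEnd ℂ (φ y))
    {x : F} {c : K} (hx : x ^ 2 = algebraMap K F c) (hx0 : x ≠ 0) : τ x = x ↔ 0 < ι c := by
  rw [← φ.injective.eq_iff, hτ]
  exact Complex.conj_eq_iff_pos_of_sq_eq (map_ne_zero φ |>.mpr hx0) (by rw [← map_pow, hx, hφ])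

end RealPlaces

theorem Valuation.map_eq_one_of_map_sub_one_lt {R Γ₀ : Type*} [Ring R]
    [LinearOrderedCommMonoidWithZero Γ₀] (v : Valuation R Γ₀) {x : R} (h : v (x - 1) < 1) :
    v x = 1 := by
  simpa using v.map_one_sub_of_lt (x := 1 - x) (by rwa [Valuation.map_sub_swap])

section Units

variable {K : Type*} [Field K] [NumberField K]

variable (K) in
def unitsETSSubmonoid (T S₀ : Set (HeightOneSpectrum (𝓞 K))) (Sinf : Set (InfinitePlace K)) :
    Submonoid Kˣ where
  carrier := unitsETS K T S₀ Sinf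
  one_mem' := ⟨fun _ _ => by simp, fun _ _ _ => by simp, fun _ _ => by simp⟩
  mul_mem' := by
    rintro a b ⟨haS₀, haRe, haT⟩ ⟨hbS₀, hbRe, hbT⟩
    refine ⟨fun v hv => by simp [haS₀ v hv, hbS₀ v hv],
      fun w hw hwS => by simpa using mul_pos (haRe w hw hwS) (hbRe w hw hwS), fun v hv => ?_⟩
    calc v.valuation K ((a * b : Kˣ) - 1) = v.valuation K (a * (b - 1) + (a - 1)) := by
          push_cast; ring_nf
      _ ≤ max (v.valuation K (a * (b - 1))) (v.valuation K (a - 1)) := Valuation.map_add _ _ _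
      _ < 1 := by
        refine max_lt ?_ (haT v hv)
        rw [map_mul, (v.valuation K).map_eq_one_of_map_sub_one_lt (haT v hv), one_mul]
        exact hbT v hv

theorem mem_unitsETS_iff {T S₀ : Set (HeightOneSpectrum (𝓞 K))} {Sinf : Set (InfinitePlace K)}
    {ε : Kˣ} : ε ∈ unitsETS K T S₀ Sinf ↔ ε ∈ unitsETS K T S₀ {w | IsReal w} ∧
      ∀ (w : InfinitePlace K) (hw : IsReal w), w ∉ Sinf → 0 < embedding_of_isReal hw (ε : K) :=
  ⟨fun ⟨hS₀, hRe, hT⟩ => ⟨⟨hS₀, fun _ hw hw' => absurd hw hw', hT⟩, hRe⟩,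
    fun ⟨⟨hS₀, _, hT⟩, hRe⟩ => ⟨hS₀, hRe, hT⟩⟩

end Units

section Conjugations

variable {K : Type*} [Field K]

variable (F : Type*) [Field F] [Algebra K F] in
def realConjugations (Sinf : Set (InfinitePlace K)) : Set (F ≃ₐ[K] F) :=
  {τ : F ≃ₐ[K] F | ∃ (u : InfinitePlace K) (hu : IsReal u), u ∉ Sinf ∧
    ∃ φ : F →+* ℂ,
      (∀ x : K, φ (algebraMap K F x) = (embedding_of_isReal hu x : ℂ)) ∧
      ∀ y : F, φ (τ y) = starRingEnd ℂ (φ y)}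

theorem forall_mem_realConjugations_apply_eq_iff {F : Type*} [Field F] [Algebra K F]
    [Normal K F] {Sinf : Set (InfinitePlace K)} {x : F} {ε : Kˣ}
    (hx : x ^ 2 = algebraMap K F (ε : K)) : (∀ τ ∈ realConjugations F Sinf, τ x = x) ↔
      ∀ (w : InfinitePlace K) (hw : IsReal w), w ∉ Sinf → 0 < embedding_of_isReal hw (ε : K) := by
  have hx0 := ne_zero_of_mem_sqrts (E := {ε}) ⟨ε, rfl, hx⟩
  constructor
  · intro h w hw hwS
    obtain ⟨τ, φ, hφ, hτ⟩ :=
      exists_algEquiv_conj_of_realEmbedding (F := F) (embedding_of_isReal hw)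
    exact (apply_eq_iff_pos_of_conj hφ hτ hx hx0).mp (h τ ⟨w, hw, hwS, φ, hφ, hτ⟩)
  · rintro h τ ⟨w, hw, hwS, φ, hφ, hτ⟩
    exact (apply_eq_iff_pos_of_conj hφ hτ hx hx0).mpr (h w hw hwS)

end Conjugations

theorem fixedField_of_conjugations_eq_governing_subfield_general
    (K F : Type*) [Field K] [NumberField K] [Field F] [NumberField F] [Algebra K F]
    (T S₀ : Set (IsDedekindDomain.HeightOneSpectrum (𝓞 K)))
    (Sinf : Set (InfinitePlace K))
    (hFgen : IntermediateField.adjoin K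
      {x : F | ∃ ε : Kˣ, ε ∈ unitsETS K T S₀ {w : InfinitePlace K | IsReal w} ∧
        x ^ 2 = algebraMap K F (ε : K)} = ⊤) :
    IntermediateField.fixedField
      (Subgroup.closure
        {τ : F ≃ₐ[K] F | ∃ (u : InfinitePlace K) (hu : IsReal u), u ∉ Sinf ∧
          ∃ φ : F →+* ℂ,
            (∀ x : K, φ (algebraMap K F x) = (embedding_of_isReal hu x : ℂ)) ∧
            ∀ y : F, φ (τ y) = starRingEnd ℂ (φ y)}) =
      IntermediateField.adjoin K
        {x : F | ∃ ε : Kˣ, ε ∈ unitsETS K T S₀ Sinf ∧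
          x ^ 2 = algebraMap K F (ε : K)} := by
  have : Normal K F := normal_of_adjoin_sqrts_eq_top hFgen
  have : IsGalois K F := {}
  change fixedField (Subgroup.closure (realConjugations F Sinf)) =
    adjoin K (sqrts F (unitsETS K T S₀ Sinf))
  rw [fixedField_eq_adjoin_sqrts_inter (E := unitsETSSubmonoid K T S₀ {w | IsReal w}) hFgen]
  congr 1
  ext x
  rw [Set.mem_inter_iff, SetLike.mem_coe, mem_fixedField_closure_iff]
  constructor
  · rintro ⟨⟨ε, hε, hx⟩, hfix⟩
    exact ⟨ε, mem_unitsETS_iff.mpr ⟨hε, (forall_mem_realConjugations_apply_eq_iff hx).mp hfix⟩, hx⟩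
  · rintro ⟨ε, hε, hx⟩
    obtain ⟨hε', hpos⟩ := mem_unitsETS_iff.mp hε
    exact ⟨⟨ε, hε', hx⟩, (forall_mem_realConjugations_apply_eq_iff hx).mpr hpos⟩

/-- Take `p = 2` (so `K' = K`) and set `S̄ = S_0 ∪ Pl^{re}_K`.  For each
real place `v ∈ Pl^{re}_K \ S_∞`, let `τ_v ∈ Gal(F_T^{S̄}/K)` denote the complex conjugation
induced by any embedding of `F_T^{S̄}` into `ℂ` extending the real embedding `ι_v` of `K`, and
let `H_{S_∞}` be the subgroup of `Gal(F_T^{S̄}/K)` generated by all such `τ_v`.  Then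
`F_T^S = K(√E_T^S)` is the fixed field of `H_{S_∞}` in `F_T^{S̄} = K(√E_T^{S̄})`;
equivalently, `Gal(K(√E_T^S)/K) ≅ Gal(F_T^{S̄}/K)/H_{S_∞}`. -/
theorem fixedField_of_conjugations_eq_governing_subfield
    (K F : Type*) [Field K] [NumberField K] [Field F] [NumberField F] [Algebra K F]
    (T S₀ : Set (IsDedekindDomain.HeightOneSpectrum (𝓞 K)))
    (Sinf : Set (InfinitePlace K))
    (hTfin : T.Finite) (hS₀fin : S₀.Finite) (hSreal : ∀ u ∈ Sinf, IsReal u)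
    (hTS : ∀ u ∈ T, u ∉ S₀)
    (hTmod : ∀ u ∈ T, Ideal.absNorm u.asIdeal ≡ 1 [MOD 2])
    (hFgen : IntermediateField.adjoin K
      {x : F | ∃ ε : Kˣ, ε ∈ unitsETS K T S₀ {w : InfinitePlace K | IsReal w} ∧
        x ^ 2 = algebraMap K F (ε : K)} = ⊤) :
    IntermediateField.fixedField
      (Subgroup.closure
        {τ : F ≃ₐ[K] F | ∃ (u : InfinitePlace K) (hu : IsReal u), u ∉ Sinf ∧
          ∃ φ : F →+* ℂ,
            (∀ x : K, φ (algebraMap K F x) = (embedding_of_isReal hu x : ℂ)) ∧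
            ∀ y : F, φ (τ y) = starRingEnd ℂ (φ y)}) =
      IntermediateField.adjoin K
        {x : F | ∃ ε : Kˣ, ε ∈ unitsETS K T S₀ Sinf ∧
          x ^ 2 = algebraMap K F (ε : K)} :=
  fixedField_of_conjugations_eq_governing_subfield_general K F T S₀ Sinf hFgen
end

section
/- Let K be a number field, p a prime, and S_0 a finite set of finite places of K. Let V_S = {x ∈ K^× : v(x) ≡ 0 (mod p) for every finite place v ∉ S_0} and let E^{S̄} = {x ∈ K^× : v(x) = 0 for every finite place v ∉ S_0} be the S_0-unit group. Then there is an exact sequence of abelian groups 1 → E^{S̄}(K^×)^p/(K^×)^p → V_S/(K^×)^p → Cl^S_K[p] → 1, where Cl^S_K is the class group of the ring of S_0-integers of K, Cl^S_K[p] its p-torsion subgroup, and the right-hand map sends the class of x to the class of the unique fractional ideal I supported away from S_0 whose p-th power is the prime-to-S_0 part of the principal ideal (x). -/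
open IsDedekindDomain NumberField
open scoped Multiplicative nonZeroDivisors WithZero

/-!
Let `B` be the ring of `S₀`-integers. Since the class group of `𝓞 K` is finite, every prime of
`S₀` has a power that is principal with a generator which is a unit away from `S₀`. So `B` is a
localization of `𝓞 K`, hence a Dedekind domain, whose primes are the primes of `𝓞 K` outside `S₀`,
with the same valuations. The condition defining `V` then says exactly that the fractional ideal
`(x)` of `B` is a `p`-th power `I ^ p`. The group of invertible fractional ideals of a Dedekind
domain is torsion-free, so `I` is unique, and `x ↦ [I]` is a homomorphism to `Cl(B)`. Its kernel
consists of the `x` with `I = (y)`, i.e. `x = u * y ^ p` for a unit `u` of `B` (an `S₀`-unit).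
Its image consists of the classes `[I]` with `I ^ p` principal, i.e. `Cl(B)[p]`.
-/

def pTorsion (G : Type*) [CommGroup G] (p : ℕ) : Subgroup G where
  carrier := {c | c ^ p = 1}
  one_mem' := one_pow p
  mul_mem' := fun {a b} ha hb => by
    simp only [Set.mem_setOf_eq] at *
    rw [mul_pow, ha, hb, one_mul]
  inv_mem' := fun {a} ha => by
    simp only [Set.mem_setOf_eq] at *
    rw [inv_pow, ha, inv_one]

open HeightOneSpectrum WithZero

theorem WithZero.exists_pow_eq_exp_iff {p : ℕ} (hp : p ≠ 0) (n : ℤ) :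
    (∃ γ : ℤᵐ⁰, γ ^ p = exp n) ↔ (p : ℤ) ∣ n := by
  constructor
  · rintro ⟨γ, hγ⟩
    have hγ0 : γ ≠ 0 := by
      rintro rfl
      exact exp_ne_zero (hγ ▸ zero_pow hp)
    rw [← exp_log hγ0, ← exp_nsmul, exp_inj] at hγ
    exact ⟨log γ, by rw [← hγ, nsmul_eq_mul]⟩
  · rintro ⟨k, rfl⟩
    exact ⟨exp k, by rw [← exp_nsmul, nsmul_eq_mul]⟩

namespace QuotientGroup

theorem range_lift {G M : Type*} [Group G] [Group M] (N : Subgroup G) [N.Normal] (φ : G →* M)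
    (HN : N ≤ φ.ker) : (lift N φ HN).range = φ.range := by
  conv_rhs => rw [← lift_comp_mk' N φ HN]
  rw [MonoidHom.range_comp, range_mk', ← MonoidHom.range_eq_map]

variable {G : Type*} [CommGroup G] {N E V : Subgroup G} (h : E ≤ V)
  (h' : N.subgroupOf E ≤ (N.subgroupOf V).comap (Subgroup.inclusion h))

theorem map_inclusion_injective :
    Function.Injective (map (N.subgroupOf E) (N.subgroupOf V) (Subgroup.inclusion h) h') := by
  rw [← MonoidHom.ker_eq_bot_iff, ker_map]
  exact map_mk'_self _

theorem ker_lift_eq_range_map {M : Type*} [Group M] {φ : V →* M} (hN : N.subgroupOf V ≤ φ.ker)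
    (hker : φ.ker = E.subgroupOf V) :
    (lift (N.subgroupOf V) φ hN).ker =
      (map (N.subgroupOf E) (N.subgroupOf V) (Subgroup.inclusion h) h').range := by
  rw [ker_lift, hker, ← Subgroup.inclusion_range h, ← MonoidHom.range_comp]
  exact (range_lift _ _ _).symm

end QuotientGroup

section Dedekind

variable {B K : Type*} [CommRing B] [IsDedekindDomain B] [Field K] [Algebra B K]
  [IsFractionRing B K]

namespace FractionalIdeal

theorem eq_of_count_eq {I J : FractionalIdeal B⁰ K} (hI : I ≠ 0) (hJ : J ≠ 0)
    (h : ∀ v : HeightOneSpectrum B, count K v I = count K v J) : I = J := by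
  rw [← finprod_heightOneSpectrum_factorization' K hI,
    ← finprod_heightOneSpectrum_factorization' K hJ]
  simp only [h]

theorem units_pow_injective {p : ℕ} (hp : p ≠ 0) :
    Function.Injective (powMonoidHom p : (FractionalIdeal B⁰ K)ˣ →* (FractionalIdeal B⁰ K)ˣ) := by
  intro I J hIJ
  refine Units.ext (eq_of_count_eq I.ne_zero J.ne_zero fun v => ?_)
  have := congrArg (fun L : (FractionalIdeal B⁰ K)ˣ => count K v (L : FractionalIdeal B⁰ K)) hIJ
  simp only [powMonoidHom_apply, Units.val_pow_eq_pow_val, count_pow] at this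
  exact mul_left_cancel₀ (Int.natCast_ne_zero.mpr hp) this

theorem units_mem_range_pow_iff {p : ℕ} (I : (FractionalIdeal B⁰ K)ˣ) :
    I ∈ (powMonoidHom p).range ↔ ∀ v : HeightOneSpectrum B, (p : ℤ) ∣ count K v I := by
  constructor
  · rintro ⟨J, rfl⟩ v
    simp [count_pow]
  · intro h
    set J : FractionalIdeal B⁰ K := ∏ᶠ v : HeightOneSpectrum B,
      (v.asIdeal : FractionalIdeal B⁰ K) ^ (count K v I / p)
    have hJ : J ≠ 0 := finprod_induction (· ≠ 0) one_ne_zero (fun _ _ => mul_ne_zero)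
      fun v => zpow_ne_zero _ (coeIdeal_ne_zero.mpr v.ne_bot)
    have hcount : ∀ v, count K v J = count K v I / p := fun v =>
      count_finprod K v _ ((finite_factors (I : FractionalIdeal B⁰ K)).mono fun w hw => by
        simp [hw])
    refine ⟨Units.mk0 J hJ, Units.ext (eq_of_count_eq (pow_ne_zero _ hJ) I.ne_zero fun v => ?_)⟩
    rw [powMonoidHom_apply, Units.val_pow_eq_pow_val, Units.val_mk0, count_pow, hcount,
      Int.mul_ediv_cancel' (h v)]

end FractionalIdeal

theorem IsDedekindDomain.HeightOneSpectrum.valuation_eq_exp_neg_count (v : HeightOneSpectrum B)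
    {x : K} (hx : x ≠ 0) :
    v.valuation K x = exp (-FractionalIdeal.count K v (FractionalIdeal.spanSingleton B⁰ x)) := by
  obtain ⟨n, d, hd, rfl⟩ := IsFractionRing.div_surjective (A := B) x
  have hn : n ≠ 0 := by rintro rfl; simp at hx
  have hspan : FractionalIdeal.spanSingleton B⁰ (algebraMap B K n / algebraMap B K d) =
      FractionalIdeal.spanSingleton B⁰ (algebraMap B K d)⁻¹ * ↑(Ideal.span {n} : Ideal B) := by
    rw [FractionalIdeal.coeIdeal_span_singleton, FractionalIdeal.spanSingleton_mul_spanSingleton,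
      div_eq_mul_inv, mul_comm]
  rw [FractionalIdeal.count_well_defined K v (FractionalIdeal.spanSingleton_ne_zero_iff.mpr hx)
    hspan, map_div₀, valuation_of_algebraMap, valuation_of_algebraMap, v.intValuation_if_neg hn,
    v.intValuation_if_neg (nonZeroDivisors.ne_zero hd), ← exp_sub]
  congr 1
  ring

theorem toPrincipalIdeal_mem_range_pow_iff {p : ℕ} (hp : p ≠ 0) (x : Kˣ) :
    toPrincipalIdeal B K x ∈ (powMonoidHom p).range ↔
      ∀ v : HeightOneSpectrum B, ∃ γ : ℤᵐ⁰, γ ^ p = v.valuation K x := by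
  rw [FractionalIdeal.units_mem_range_pow_iff]
  refine forall_congr' fun v => ?_
  rw [v.valuation_eq_exp_neg_count x.ne_zero, WithZero.exists_pow_eq_exp_iff hp, dvd_neg,
    coe_toPrincipalIdeal]

theorem ker_toPrincipalIdeal :
    (toPrincipalIdeal B K).ker = (Units.map (algebraMap B K : B →* K)).range := by
  ext x
  rw [MonoidHom.mem_ker, ← map_one (toPrincipalIdeal B K), toPrincipalIdeal_eq_iff,
    coe_toPrincipalIdeal, Units.val_one, FractionalIdeal.spanSingleton_eq_spanSingleton]
  constructor
  · rintro ⟨u, hu⟩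
    refine ⟨u⁻¹, Units.ext ?_⟩
    rw [Units.smul_def, Algebra.smul_def] at hu
    simp [eq_inv_of_mul_eq_one_right hu]
  · rintro ⟨u, rfl⟩
    exact ⟨u⁻¹, by simp [Units.smul_def, Algebra.smul_def]⟩

theorem ClassGroup.mk_eq_one_iff_mem_range {I : (FractionalIdeal B⁰ K)ˣ} :
    ClassGroup.mk K I = 1 ↔ I ∈ (toPrincipalIdeal B K).range := by
  rw [ClassGroup.mk_eq_one_iff, mem_principal_ideals_iff]
  constructor
  · rintro ⟨x, hx⟩
    exact ⟨x, FractionalIdeal.coeToSubmodule_injective (by simp [hx])⟩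
  · rintro ⟨x, hx⟩
    exact ⟨x, by rw [← hx, FractionalIdeal.coe_spanSingleton]⟩

end Dedekind

section Selmer

variable (B K : Type*) [CommRing B] [IsDedekindDomain B] [Field K] [Algebra B K]
  [IsFractionRing B K]

/-- `V_S` of the statement, when `B` is the ring of `S`-integers. -/
def selmerSubgroup (p : ℕ) : Subgroup Kˣ :=
  (powMonoidHom p).range.comap (toPrincipalIdeal B K)

variable {B K} {p : ℕ}

/-- The `p`-th root of the principal fractional ideal `(x)`. -/
noncomputable def selmerRoot (hp : p ≠ 0) : selmerSubgroup B K p →* (FractionalIdeal B⁰ K)ˣ :=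
  (MonoidHom.ofInjective (FractionalIdeal.units_pow_injective hp)).symm.toMonoidHom.comp
    (((toPrincipalIdeal B K).comp (selmerSubgroup B K p).subtype).codRestrict _ fun x => x.2)

theorem selmerRoot_eq_iff (hp : p ≠ 0) (x : selmerSubgroup B K p) (I : (FractionalIdeal B⁰ K)ˣ) :
    selmerRoot hp x = I ↔ I ^ p = toPrincipalIdeal B K x := by
  rw [selmerRoot, MonoidHom.comp_apply, MulEquiv.coe_toMonoidHom, MulEquiv.symm_apply_eq,
    Subtype.ext_iff, MonoidHom.ofInjective_apply, eq_comm]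
  rfl

theorem selmerRoot_pow (hp : p ≠ 0) (x : selmerSubgroup B K p) :
    selmerRoot hp x ^ p = toPrincipalIdeal B K x :=
  (selmerRoot_eq_iff hp x _).mp rfl

noncomputable def selmerClass (hp : p ≠ 0) : selmerSubgroup B K p →* ClassGroup B :=
  (ClassGroup.mk K).comp (selmerRoot hp)

theorem selmerClass_apply_of_pow_eq (hp : p ≠ 0) {x : selmerSubgroup B K p}
    {I : (FractionalIdeal B⁰ K)ˣ} (hI : I ^ p = toPrincipalIdeal B K x) :
    selmerClass hp x = ClassGroup.mk K I := by
  rw [selmerClass, MonoidHom.comp_apply, (selmerRoot_eq_iff hp x I).mpr hI]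

theorem ker_selmerClass (hp : p ≠ 0) :
    (selmerClass (B := B) (K := K) hp).ker =
      ((Units.map (algebraMap B K : B →* K)).range ⊔ (powMonoidHom p).range).subgroupOf
        (selmerSubgroup B K p) := by
  ext x
  rw [MonoidHom.mem_ker, Subgroup.mem_subgroupOf, selmerClass, MonoidHom.comp_apply,
    ClassGroup.mk_eq_one_iff_mem_range, Subgroup.mem_sup]
  constructor
  · rintro ⟨y, hy⟩
    have hxy : toPrincipalIdeal B K (x * (y ^ p)⁻¹) = 1 := by
      rw [map_mul, map_inv, map_pow, hy, selmerRoot_pow, mul_inv_cancel]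
    obtain ⟨u, hu⟩ : (x : Kˣ) * (y ^ p)⁻¹ ∈ (Units.map (algebraMap B K : B →* K)).range := by
      rw [← ker_toPrincipalIdeal]
      exact hxy
    exact ⟨_, ⟨u, hu⟩, y ^ p, ⟨y, rfl⟩, inv_mul_cancel_right _ _⟩
  · rintro ⟨_, ⟨u, rfl⟩, _, ⟨y, rfl⟩, hx⟩
    refine ⟨y, ((selmerRoot_eq_iff hp x _).mpr ?_).symm⟩
    have hu : toPrincipalIdeal B K (Units.map (algebraMap B K : B →* K) u) = 1 := by
      rw [← MonoidHom.mem_ker, ker_toPrincipalIdeal]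
      exact ⟨u, rfl⟩
    rw [← hx, map_mul, hu, one_mul, powMonoidHom_apply, map_pow]

theorem range_selmerClass (hp : p ≠ 0) :
    (selmerClass (B := B) (K := K) hp).range = pTorsion (ClassGroup B) p := by
  ext C
  constructor
  · rintro ⟨x, rfl⟩
    change selmerClass hp x ^ p = 1
    rw [selmerClass, MonoidHom.comp_apply, ← map_pow, selmerRoot_pow,
      ClassGroup.mk_eq_one_iff_mem_range]
    exact ⟨x, rfl⟩
  · refine ClassGroup.induction K (fun I hI => ?_) C
    obtain ⟨y, hy⟩ := ClassGroup.mk_eq_one_iff_mem_range.mp ((map_pow _ I p).trans hI)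
    exact ⟨⟨y, I, hy.symm⟩, selmerClass_apply_of_pow_eq hp hy.symm⟩

end Selmer

namespace IsDedekindDomain.HeightOneSpectrum

theorem intValuation_eq_of_forall_mem_pow_iff {A B : Type*} [CommRing A] [IsDedekindDomain A]
    [CommRing B] [IsDedekindDomain B] {v : HeightOneSpectrum A} {w : HeightOneSpectrum B}
    {a : A} {b : B} (ha : a ≠ 0) (hb : b ≠ 0)
    (h : ∀ n : ℕ, a ∈ v.asIdeal ^ n ↔ b ∈ w.asIdeal ^ n) : v.intValuation a = w.intValuation b := by
  rw [v.intValuation_eq_exp_neg_multiplicity ha, w.intValuation_eq_exp_neg_multiplicity hb]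
  congr 3
  refine eq_of_forall_le_iff fun n => ?_
  simpa only [← intValuation_le_pow_iff_mem, intValuation_eq_exp_neg_multiplicity _ ha,
    intValuation_eq_exp_neg_multiplicity _ hb, exp_le_exp, neg_le_neg_iff, Nat.cast_le] using h n

variable {A : Type*} [CommRing A] {M : Submonoid A} {B : Type*} [CommRing B] [Algebra A B]
  [IsLocalization M B]

def ofDisjoint (hM : M ≤ A⁰) (v : HeightOneSpectrum A) (hv : Disjoint (M : Set A) v.asIdeal) :
    HeightOneSpectrum B where
  asIdeal := v.asIdeal.map (algebraMap A B)
  isPrime := IsLocalization.isPrime_of_isPrime_disjoint M B _ v.isPrime hv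
  ne_bot := (Ideal.map_eq_bot_iff_of_injective (IsLocalization.injective B hM)).not.mpr v.ne_bot

theorem exists_ofDisjoint_eq (hM : M ≤ A⁰) (w : HeightOneSpectrum B) :
    ∃ (v : HeightOneSpectrum A) (hv : Disjoint (M : Set A) v.asIdeal), v.ofDisjoint hM hv = w := by
  obtain ⟨hprime, hdisj⟩ := (IsLocalization.isPrime_iff_isPrime_disjoint M B w.asIdeal).mp w.isPrime
  have hmap := IsLocalization.map_under M B w.asIdeal
  refine ⟨⟨_, hprime, fun hbot => w.ne_bot ?_⟩, hdisj, HeightOneSpectrum.ext hmap⟩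
  rw [← hmap, hbot, Ideal.map_bot]

variable [IsDedekindDomain A]

theorem algebraMap_mem_pow_ofDisjoint_iff (hM : M ≤ A⁰) (v : HeightOneSpectrum A)
    (hv : Disjoint (M : Set A) v.asIdeal) (a : A) (n : ℕ) :
    algebraMap A B a ∈ (v.ofDisjoint hM hv).asIdeal ^ n ↔ a ∈ v.asIdeal ^ n := by
  rcases n.eq_zero_or_pos with rfl | hn
  · simp
  have hprimary : (v.asIdeal ^ n).IsPrimary := Ideal.isPrimary_of_isMaximal_radical
    (by rw [Ideal.radical_pow _ hn.ne', v.isPrime.radical]; exact v.isMaximal)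
  rw [ofDisjoint, ← Ideal.map_pow, ← Ideal.mem_comap]
  exact SetLike.ext_iff.mp (IsLocalization.under_map_of_isPrimary_disjoint M B hprimary
    (hv.mono_right (Ideal.pow_le_self hn.ne'))) a

variable [IsDedekindDomain B]

theorem intValuation_ofDisjoint (hM : M ≤ A⁰) (v : HeightOneSpectrum A)
    (hv : Disjoint (M : Set A) v.asIdeal) (a : A) :
    (v.ofDisjoint hM hv).intValuation (algebraMap A B a) = v.intValuation a := by
  rcases eq_or_ne a 0 with rfl | ha
  · simp
  exact (intValuation_eq_of_forall_mem_pow_iff ha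
    ((map_ne_zero_iff _ (IsLocalization.injective B hM)).mpr ha)
    fun n => (algebraMap_mem_pow_ofDisjoint_iff hM v hv a n).symm).symm

variable (K : Type*) [Field K] [Algebra A K] [IsFractionRing A K] [Algebra B K]
  [IsFractionRing B K] [IsScalarTower A B K]

theorem valuation_ofDisjoint (hM : M ≤ A⁰) (v : HeightOneSpectrum A)
    (hv : Disjoint (M : Set A) v.asIdeal) (x : K) :
    (v.ofDisjoint (B := B) hM hv).valuation K x = v.valuation K x := by
  obtain ⟨a, b, -, rfl⟩ := IsFractionRing.div_surjective (A := A) x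
  have hA : ∀ a : A, (v.ofDisjoint (B := B) hM hv).valuation K (algebraMap A K a) =
      v.valuation K (algebraMap A K a) := fun a => by
    rw [valuation_of_algebraMap, IsScalarTower.algebraMap_apply A B K, valuation_of_algebraMap,
      intValuation_ofDisjoint]
  rw [map_div₀, map_div₀, hA, hA]

theorem forall_valuation_iff_of_isLocalization (hM : M ≤ A⁰) (P : ℤᵐ⁰ → Prop) (x : K) :
    (∀ w : HeightOneSpectrum B, P (w.valuation K x)) ↔
      ∀ v : HeightOneSpectrum A, Disjoint (M : Set A) v.asIdeal → P (v.valuation K x) := by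
  refine ⟨fun h v hv => valuation_ofDisjoint (B := B) K hM v hv x ▸ h _, fun h w => ?_⟩
  obtain ⟨v, hv, rfl⟩ := exists_ofDisjoint_eq hM w
  rw [valuation_ofDisjoint]
  exact h v hv

end IsDedekindDomain.HeightOneSpectrum

namespace Set

variable {R : Type*} [CommRing R] (S : Set (HeightOneSpectrum R))

def unitSubmonoid : Submonoid R :=
  R⁰ ⊓ ⨅ (v : HeightOneSpectrum R) (_ : v ∉ S), v.asIdeal.primeCompl

theorem unitSubmonoid_le : S.unitSubmonoid ≤ R⁰ := inf_le_left

variable {S}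

theorem mem_unitSubmonoid {m : R} :
    m ∈ S.unitSubmonoid ↔ m ∈ R⁰ ∧ ∀ v ∉ S, m ∉ v.asIdeal := by
  simp [unitSubmonoid, Submonoid.mem_inf, Submonoid.mem_iInf, Ideal.primeCompl]

variable [IsDedekindDomain R]

theorem exists_mem_unitSubmonoid_mem [Finite (ClassGroup R)] {v : HeightOneSpectrum R}
    (hv : v ∈ S) : ∃ m ∈ S.unitSubmonoid, m ∈ v.asIdeal := by
  have hv0 : v.asIdeal ∈ (Ideal R)⁰ := mem_nonZeroDivisors_of_ne_zero v.ne_bot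
  set n := orderOf (ClassGroup.mk0 ⟨v.asIdeal, hv0⟩)
  have hn : n ≠ 0 := (orderOf_pos _).ne'
  have hprincipal : ClassGroup.mk0 ⟨v.asIdeal ^ n, pow_mem hv0 n⟩ = 1 := by
    rw [← pow_orderOf_eq_one (ClassGroup.mk0 ⟨v.asIdeal, hv0⟩), ← map_pow]
    rfl
  obtain ⟨m, hm⟩ := ((ClassGroup.mk0_eq_one_iff _).mp hprincipal).principal
  have hmv : m ∈ v.asIdeal ^ n := hm ▸ Ideal.mem_span_singleton_self m
  refine ⟨m, mem_unitSubmonoid.mpr ⟨mem_nonZeroDivisors_of_ne_zero ?_, fun w hw hmw => ?_⟩,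
    Ideal.pow_le_self hn hmv⟩
  · rintro rfl
    exact pow_ne_zero n v.ne_bot (by simpa using hm)
  · have hvw : v.asIdeal ≤ w.asIdeal :=
      w.isPrime.le_of_pow_le ((Ideal.span_singleton_le_iff_mem _).mpr hmw |>.trans' hm.le)
    exact hw (HeightOneSpectrum.ext (v.isMaximal.eq_of_le w.isPrime.ne_top hvw) ▸ hv)

theorem disjoint_unitSubmonoid_iff [Finite (ClassGroup R)] {v : HeightOneSpectrum R} :
    Disjoint (S.unitSubmonoid : Set R) v.asIdeal ↔ v ∉ S := by
  refine ⟨fun h hv => ?_, fun hv => Set.disjoint_left.mpr fun m hm => ?_⟩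
  · obtain ⟨m, hmS, hmv⟩ := exists_mem_unitSubmonoid_mem hv
    exact Set.disjoint_left.mp h hmS hmv
  · exact (mem_unitSubmonoid.mp hm).2 v hv

variable (S) (K : Type*) [Field K] [Algebra R K] [IsFractionRing R K]

theorem exists_mem_unitSubmonoid_valuation_mul_le_one [Finite (ClassGroup R)]
    {v : HeightOneSpectrum R} (hv : v ∈ S) (z : K) :
    ∃ m ∈ S.unitSubmonoid, v.valuation K (z * algebraMap R K m) ≤ 1 := by
  rcases eq_or_ne z 0 with rfl | hz
  · exact ⟨1, one_mem _, by simp⟩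
  obtain ⟨m, hmS, hmv⟩ := exists_mem_unitSubmonoid_mem hv
  have hz' : v.valuation K z ≠ 0 := (Valuation.ne_zero_iff _).mpr hz
  obtain ⟨n, hn⟩ :=
    exists_pow_lt₀ ((valuation_lt_one_iff_mem (K := K) v m).mpr hmv) (Units.mk0 _ hz')⁻¹
  refine ⟨m ^ n, pow_mem hmS n, ?_⟩
  rw [Units.val_inv_eq_inv_val, Units.val_mk0] at hn
  rw [map_mul]
  calc v.valuation K z * v.valuation K (algebraMap R K (m ^ n))
      ≤ v.valuation K z * (v.valuation K z)⁻¹ := by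
        rw [map_pow, map_pow]
        gcongr
    _ = 1 := mul_inv_cancel₀ hz'

instance isLocalization_integer [Finite (ClassGroup R)] :
    IsLocalization S.unitSubmonoid (S.integer K) where
  map_units := by
    rintro ⟨m, hm⟩
    have hm0 : algebraMap R K m ≠ 0 := IsFractionRing.to_map_ne_zero_of_mem_nonZeroDivisors
      (mem_unitSubmonoid.mp hm).1
    refine IsUnit.of_mul_eq_one ⟨(algebraMap R K m)⁻¹, fun v hv => ?_⟩
      (Subtype.ext (mul_inv_cancel₀ hm0))
    rw [map_inv₀, (valuation_eq_one_iff_notMem v).mpr ((mem_unitSubmonoid.mp hm).2 v hv), inv_one]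
  surj z := by
    classical
    -- `z` is integral outside its finite support `T ⊆ S`; clear its denominator at each `v ∈ T`.
    set T := (HeightOneSpectrum.Support.finite R (z : K)).toFinset
    have hTS : ∀ v ∈ T, v ∈ S := fun v hv => by_contra fun hvS =>
      (not_lt.mpr (z.2 v hvS)) ((HeightOneSpectrum.Support.finite R (z : K)).mem_toFinset.mp hv)
    choose! m hmS hm using fun v hv =>
      exists_mem_unitSubmonoid_valuation_mul_le_one S K (hTS v hv) (z : K)
    have hint : ∀ v : HeightOneSpectrum R,
        v.valuation K (z * algebraMap R K (∏ w ∈ T, m w)) ≤ 1 := by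
      intro v
      by_cases hv : v ∈ T
      · rw [← Finset.mul_prod_erase T m hv, map_mul (algebraMap R K), ← mul_assoc,
          map_mul (v.valuation K)]
        exact mul_le_one' (hm v hv) (v.valuation_le_one _)
      · rw [map_mul]
        exact mul_le_one' (not_lt.mp fun h => hv ((Support.finite R _).mem_toFinset.mpr h))
          (v.valuation_le_one _)
    obtain ⟨r, hr⟩ := mem_integers_of_valuation_le_one K _ hint
    exact ⟨⟨r, ⟨_, prod_mem hmS⟩⟩, Subtype.ext hr.symm⟩
  exists_of_eq {a b} h :=
    ⟨1, by simpa using IsFractionRing.injective R K (congrArg Subtype.val h)⟩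

theorem isDedekindDomain_integer [Finite (ClassGroup R)] : IsDedekindDomain (S.integer K) :=
  IsLocalization.isDedekindDomain R S.unitSubmonoid_le (S.integer K)

theorem forall_valuation_integer_iff [Finite (ClassGroup R)] [IsDedekindDomain (S.integer K)]
    [IsFractionRing (S.integer K) K] (P : ℤᵐ⁰ → Prop) (x : K) :
    (∀ w : HeightOneSpectrum (S.integer K), P (w.valuation K x)) ↔
      ∀ v : HeightOneSpectrum R, v ∉ S → P (v.valuation K x) := by
  simp only [forall_valuation_iff_of_isLocalization K S.unitSubmonoid_le P x,
    disjoint_unitSubmonoid_iff]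

theorem unit_eq_range_unitsMap :
    S.unit K = (Units.map (algebraMap (S.integer K) K : S.integer K →* K)).range := by
  ext x
  constructor
  · intro hx
    exact ⟨unitEquivUnitsInteger S K ⟨x, hx⟩, Units.ext rfl⟩
  · rintro ⟨u, rfl⟩
    exact ((unitEquivUnitsInteger S K).symm u).2

end Set

theorem selmer_exact_sequence_general
    (K : Type*) [Field K] [NumberField K] (p : ℕ) (hp : p.Prime)
    (S₀ : Set (IsDedekindDomain.HeightOneSpectrum (𝓞 K)))
    [IsFractionRing (S₀.integer K) K]
    (V P E' : Subgroup Kˣ)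
    (hV : ∀ x : Kˣ, x ∈ V ↔ ∀ v : IsDedekindDomain.HeightOneSpectrum (𝓞 K), v ∉ S₀ →
      ∃ γ : ℤᵐ⁰, γ ^ p = v.valuation K (x : K))
    (hP : P = (powMonoidHom p : Kˣ →* Kˣ).range)
    (hE' : E' = S₀.unit K ⊔ P)
    (hle : E' ≤ V) :
    ∃ g : (V ⧸ P.subgroupOf V) →* ClassGroup (S₀.integer K),
      (∀ (x : Kˣ) (hx : x ∈ V)
          (I : (FractionalIdeal (S₀.integer K)⁰ K)ˣ),
        (I : FractionalIdeal (S₀.integer K)⁰ K) ^ p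
            = FractionalIdeal.spanSingleton (S₀.integer K)⁰ (x : K) →
        g (QuotientGroup.mk (⟨x, hx⟩ : V)) = ClassGroup.mk K I) ∧
      Function.Injective
        (QuotientGroup.map (P.subgroupOf E') (P.subgroupOf V)
          (Subgroup.inclusion hle) (fun y hy => hy)) ∧
      g.ker =
        (QuotientGroup.map (P.subgroupOf E') (P.subgroupOf V)
          (Subgroup.inclusion hle) (fun y hy => hy)).range ∧
      g.range = pTorsion (ClassGroup (S₀.integer K)) p := by
  have := S₀.isDedekindDomain_integer K
  have hVeq : V = selmerSubgroup (S₀.integer K) K p := by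
    ext x
    rw [hV, selmerSubgroup, Subgroup.mem_comap, toPrincipalIdeal_mem_range_pow_iff hp.ne_zero,
      S₀.forall_valuation_integer_iff K fun a => ∃ γ : ℤᵐ⁰, γ ^ p = a]
  have hE : E' = (Units.map (algebraMap (S₀.integer K) K : S₀.integer K →* K)).range ⊔ P := by
    rw [hE', S₀.unit_eq_range_unitsMap K]
  subst hVeq
  have hker : (selmerClass hp.ne_zero).ker = E'.subgroupOf (selmerSubgroup (S₀.integer K) K p) := by
    rw [ker_selmerClass, hE, hP]
  have hPker : P.subgroupOf _ ≤ (selmerClass hp.ne_zero).ker :=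
    hker ▸ Subgroup.subgroupOf_mono _ (hE ▸ le_sup_right)
  refine ⟨QuotientGroup.lift _ _ hPker, fun x hx I hI => selmerClass_apply_of_pow_eq _ ?_,
    QuotientGroup.map_inclusion_injective hle _,
    QuotientGroup.ker_lift_eq_range_map hle _ hPker hker,
    (QuotientGroup.range_lift _ _ _).trans (range_selmerClass _)⟩
  exact Units.ext (by rw [Units.val_pow_eq_pow_val, hI, coe_toPrincipalIdeal])

set_option synthInstance.maxHeartbeats 1000000 in
set_option maxHeartbeats 1000000 in
/-- Let `K` be a number field, `p` a prime, and `S_0` a finite set of finite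
places of `K`.  Let `V_S = {x ∈ K^× : v(x) ≡ 0 (mod p) for every finite place v ∉ S_0}` and
let `E^{S̄} = {x ∈ K^× : v(x) = 0 for every finite place v ∉ S_0}` be the `S_0`-unit group.
Then there is an exact sequence of abelian groups
`1 → E^{S̄}(K^×)^p/(K^×)^p → V_S/(K^×)^p → Cl^S_K[p] → 1`,
where `Cl^S_K` is the class group of the ring of `S_0`-integers of `K`, `Cl^S_K[p]` its
`p`-torsion subgroup, and the right-hand map sends the class of `x` to the class of the unique
fractional ideal `I` supported away from `S_0` whose `p`-th power is the prime-to-`S_0` part of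
the principal ideal `(x)` (equivalently, working over the ring of `S_0`-integers, the class of
the fractional ideal `I` with `I^p = (x)`). -/
theorem selmer_exact_sequence
    (K : Type*) [Field K] [NumberField K] (p : ℕ) (hp : p.Prime)
    (S₀ : Set (IsDedekindDomain.HeightOneSpectrum (𝓞 K))) (hS₀fin : S₀.Finite)
    [IsFractionRing (S₀.integer K) K]
    (V P E' : Subgroup Kˣ)
    (hV : ∀ x : Kˣ, x ∈ V ↔ ∀ v : IsDedekindDomain.HeightOneSpectrum (𝓞 K), v ∉ S₀ →
      ∃ γ : ℤᵐ⁰, γ ^ p = v.valuation K (x : K))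
    (hP : P = (powMonoidHom p : Kˣ →* Kˣ).range)
    (hE' : E' = S₀.unit K ⊔ P)
    (hle : E' ≤ V) :
    ∃ g : (V ⧸ P.subgroupOf V) →* ClassGroup (S₀.integer K),
      (∀ (x : Kˣ) (hx : x ∈ V)
          (I : (FractionalIdeal (S₀.integer K)⁰ K)ˣ),
        (I : FractionalIdeal (S₀.integer K)⁰ K) ^ p
            = FractionalIdeal.spanSingleton (S₀.integer K)⁰ (x : K) →
        g (QuotientGroup.mk (⟨x, hx⟩ : V)) = ClassGroup.mk K I) ∧
      Function.Injective
        (QuotientGroup.map (P.subgroupOf E') (P.subgroupOf V)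
          (Subgroup.inclusion hle) (fun y hy => hy)) ∧
      g.ker =
        (QuotientGroup.map (P.subgroupOf E') (P.subgroupOf V)
          (Subgroup.inclusion hle) (fun y hy => hy)).range ∧
      g.range = pTorsion (ClassGroup (S₀.integer K)) p :=
  selmer_exact_sequence_general K p hp S₀ V P E' hV hP hE' hle
end
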